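/- arXiv:2501.03213 — 7 statements merged into one kernel-verified Lean document; each statement's English description precedes it below -/
import Mathlib

section
/- Let x_1 > x_2 > ... > x_N be distinct real numbers and q ∈ ℝ. Then the sum over i = 1,...,N of the products ∏_{j ≠ i} (x_i - x_j - q)/(x_i - x_j) equals N. In particular, the q-deformed Perelomov-Popov measure is a signed measure of total mass 1. -/
open Finset Polynomial

lemma qPP_basis_coeff {N : ℕ} (x : Fin N → ℝ) (hinj : Function.Injective x) (i : Fin N) :
    (Lagrange.basis Finset.univ x i).coeff (N - 1) =
      ∏ j ∈ Finset.univ.erase i, (x i - x j)⁻¹ := by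
  have hne : ∀ j ∈ Finset.univ.erase i, x i ≠ x j := by
    intro j hj
    exact fun h => (Finset.mem_erase.mp hj).1 (hinj h).symm
  have hdeg : (Lagrange.basis Finset.univ x i).natDegree = N - 1 := by
    have := Lagrange.degree_basis (Set.injOn_of_injective hinj) (Finset.mem_univ i)
    have h := Polynomial.natDegree_eq_of_degree_eq_some (by
      simpa [Finset.card_univ] using this)
    simpa using h
  rw [← hdeg, Polynomial.coeff_natDegree]
  unfold Lagrange.basis
  rw [Polynomial.leadingCoeff_prod]
  refine Finset.prod_congr rfl fun j hj => ?_
  unfold Lagrange.basisDivisor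
  rw [Polynomial.leadingCoeff_mul, Polynomial.leadingCoeff_C,
    Polynomial.leadingCoeff_X_sub_C, mul_one]

/-- For strictly decreasing reals `x₁ > x₂ > … > x_N` and any real `q`, the sum of
the Perelomov-Popov weights `∏_{j ≠ i} (xᵢ - xⱼ - q)/(xᵢ - xⱼ)` over `i` equals `N`:
the q-deformed Perelomov-Popov measure is a signed measure of total mass 1. -/
theorem qPP_total_mass (N : ℕ) (x : Fin N → ℝ) (q : ℝ)
    (hx : ∀ i j : Fin N, i < j → x j < x i) :
    ∑ i, ∏ j ∈ Finset.univ.erase i, (x i - x j - q) / (x i - x j) = (N : ℝ) := by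
  have hinj : Function.Injective x := by
    intro i j h
    rcases lt_trichotomy i j with hij | hij | hij
    · exact absurd h (ne_of_gt (hx i j hij))
    · exact hij
    · exact absurd h (ne_of_lt (hx j i hij))
  have hne : ∀ i : Fin N, ∀ j ∈ Finset.univ.erase i, x i - x j ≠ 0 := by
    intro i j hj
    exact sub_ne_zero.mpr fun h => (Finset.mem_erase.mp hj).1 (hinj h).symm
  rcases eq_or_ne q 0 with hq | hq
  · subst hq
    rw [Finset.sum_congr rfl (fun i _ => Finset.prod_congr rfl
      (fun j hj => by rw [sub_zero, div_self (hne i j hj)]))]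
    simp
  rcases Nat.eq_zero_or_pos N with hN | hN
  · subst hN; simp
  -- Polynomials
  set P : ℝ[X] := ∏ j : Fin N, (X - C (x j + q)) with hP
  set D : ℝ[X] := ∏ j : Fin N, (X - C (x j)) with hD
  have hPmonic : P.Monic := monic_prod_of_monic _ _ fun j _ => monic_X_sub_C _
  have hDmonic : D.Monic := monic_prod_of_monic _ _ fun j _ => monic_X_sub_C _
  have hPdeg : P.natDegree = N := by
    rw [hP, Polynomial.natDegree_prod_of_monic _ _ (fun j _ => monic_X_sub_C _)]
    simp only [Polynomial.natDegree_X_sub_C, Finset.sum_const, smul_eq_mul, mul_one, Finset.card_univ, Fintype.card_fin]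
  have hDdeg : D.natDegree = N := by
    rw [hD, Polynomial.natDegree_prod_of_monic _ _ (fun j _ => monic_X_sub_C _)]
    simp only [Polynomial.natDegree_X_sub_C, Finset.sum_const, smul_eq_mul, mul_one, Finset.card_univ, Fintype.card_fin]
  have hRdeg : (P - D).degree < (Finset.univ : Finset (Fin N)).card := by
    have h1 : P.degree = D.degree := by
      rw [Polynomial.degree_eq_natDegree hPmonic.ne_zero, Polynomial.degree_eq_natDegree hDmonic.ne_zero, hPdeg, hDdeg]
    have h2 : (P - D).degree < P.degree :=
      Polynomial.degree_sub_lt h1 hPmonic.ne_zero (by rw [hPmonic.leadingCoeff, hDmonic.leadingCoeff])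
    rw [Finset.card_univ, Fintype.card_fin]
    calc (P - D).degree < P.degree := h2
      _ = (N : WithBot ℕ) := by rw [Polynomial.degree_eq_natDegree hPmonic.ne_zero, hPdeg]
  have hinterp := Lagrange.eq_interpolate (f := P - D)
    (Set.injOn_of_injective hinj) hRdeg
  -- Evaluate (P - D) at x i
  have heval : ∀ i : Fin N, (P - D).eval (x i) =
      -q * ∏ j ∈ Finset.univ.erase i, (x i - x j - q) := by
    intro i
    have hDe : D.eval (x i) = 0 := by
      rw [hD, Polynomial.eval_prod]
      exact Finset.prod_eq_zero (Finset.mem_univ i) (by simp)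
    have hPe : P.eval (x i) = -q * ∏ j ∈ Finset.univ.erase i, (x i - x j - q) := by
      rw [hP, Polynomial.eval_prod, ← Finset.prod_erase_mul _ _ (Finset.mem_univ i)]
      simp only [Polynomial.eval_sub, Polynomial.eval_X, Polynomial.eval_C]
      rw [mul_comm]
      congr 1
      · ring
      · exact Finset.prod_congr rfl fun j hj => by ring
    rw [Polynomial.eval_sub, hDe, hPe, sub_zero]
  -- coefficient N-1 of LHS
  have hcoeffL : (P - D).coeff (N - 1) = -(N : ℝ) * q := by
    have hPn : P.coeff (N - 1) = -(∑ j : Fin N, (x j + q)) := by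
      have := Polynomial.prod_X_sub_C_nextCoeff (s := (univ : Finset (Fin N)))
        (f := fun j => x j + q)
      rwa [Polynomial.nextCoeff_of_natDegree_pos (by rw [hPdeg]; exact hN), hPdeg] at this
    have hDn : D.coeff (N - 1) = -(∑ j : Fin N, x j) := by
      have := Polynomial.prod_X_sub_C_nextCoeff (s := (univ : Finset (Fin N)))
        (f := fun j => x j)
      rwa [Polynomial.nextCoeff_of_natDegree_pos (by rw [hDdeg]; exact hN), hDdeg] at this
    rw [Polynomial.coeff_sub, hPn, hDn, Finset.sum_add_distrib, Finset.sum_const,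
      Finset.card_univ, Fintype.card_fin, nsmul_eq_mul]
    ring
  -- coefficient N-1 of RHS
  have hcoeffR : (Lagrange.interpolate Finset.univ x fun i => (P - D).eval (x i)).coeff (N - 1)
      = ∑ i, (-q * ∏ j ∈ Finset.univ.erase i, (x i - x j - q)) *
          ∏ j ∈ Finset.univ.erase i, (x i - x j)⁻¹ := by
    rw [Lagrange.interpolate_apply, Polynomial.finset_sum_coeff]
    refine Finset.sum_congr rfl fun i _ => ?_
    rw [Polynomial.coeff_C_mul, qPP_basis_coeff x hinj i, heval i]
  have key : -(N : ℝ) * q = ∑ i, (-q * ∏ j ∈ Finset.univ.erase i, (x i - x j - q)) *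
      ∏ j ∈ Finset.univ.erase i, (x i - x j)⁻¹ := by
    rw [← hcoeffL, ← hcoeffR, ← hinterp]
  have key2 : (N : ℝ) * q = q * ∑ i, ∏ j ∈ Finset.univ.erase i, (x i - x j - q) / (x i - x j) := by
    have : ∑ i, (-q * ∏ j ∈ Finset.univ.erase i, (x i - x j - q)) *
        ∏ j ∈ Finset.univ.erase i, (x i - x j)⁻¹
        = -q * ∑ i, ∏ j ∈ Finset.univ.erase i, (x i - x j - q) / (x i - x j) := by
      rw [Finset.mul_sum]
      refine Finset.sum_congr rfl fun i _ => ?_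
      rw [Finset.prod_div_distrib, div_eq_mul_inv, Finset.prod_inv_distrib]
      ring
    rw [this] at key
    linarith [key]
  have := mul_left_cancel₀ hq (by rw [← key2]; ring : q * (N : ℝ) = q * ∑ i, ∏ j ∈ Finset.univ.erase i, (x i - x j - q) / (x i - x j))
  exact this.symm
end

section
/- Let x_1 > x_2 > ... > x_N be distinct reals and q ∈ [-1, 1]. Then for every i, the weight ∏_{j ≠ i} (x_i - x_j - q)/(x_i - x_j) is nonnegative, provided the pairwise differences x_i - x_j are integers for i < j (i.e., consecutive gaps are at least 1). Hence the q-deformed Perelomov-Popov measure is a probability measure. -/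
open Finset

/-- For strictly decreasing integers `x₁ > x₂ > … > x_N` (e.g. `xᵢ = λᵢ - i` for a
signature `λ`) and `q ∈ [-1,1]`, each Perelomov-Popov weight
`∏_{j ≠ i} (xᵢ - xⱼ - q)/(xᵢ - xⱼ)` is nonnegative; hence the q-deformed
Perelomov-Popov measure is a probability measure. -/
theorem qPP_weight_nonneg (N : ℕ) (x : Fin N → ℤ) (hx : StrictAnti x)
    (q : ℝ) (hq1 : -1 ≤ q) (hq2 : q ≤ 1) (i : Fin N) :
    0 ≤ ∏ j ∈ Finset.univ.erase i, (((x i : ℝ) - (x j : ℝ) - q) / ((x i : ℝ) - (x j : ℝ))) := by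
  apply Finset.prod_nonneg
  intro j hj
  have hji : j ≠ i := Finset.ne_of_mem_erase hj
  rcases lt_or_gt_of_ne hji with h | h
  · -- j < i : x i < x j, so x i - x j ≤ -1
    have hlt : x i < x j := hx h
    have h1 : x i - x j ≤ -1 := by omega
    have h1' : (x i : ℝ) - (x j : ℝ) ≤ -1 := by exact_mod_cast h1
    apply div_nonneg_of_nonpos
    · linarith
    · linarith
  · -- i < j : x j < x i, so x i - x j ≥ 1
    have hlt : x j < x i := hx h
    have h1 : 1 ≤ x i - x j := by omega
    have h1' : (1 : ℝ) ≤ (x i : ℝ) - (x j : ℝ) := by exact_mod_cast h1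
    apply div_nonneg
    · linarith
    · linarith
end

section
/- Let x_1, ..., x_N be distinct variables, q ≠ 0, and for k ≥ 0 define the symmetric rational function m_k^{(q)}(x) = Σ_{i=1}^N (∏_{j≠i} (x_i - x_j - q)/(x_i - x_j)) x_i^k. Then as formal power series in z, Σ_{k≥0} m_k^{(q)}(x) z^{k+1} = (1/q) - (1/q) ∏_{i=1}^N (1 - (x_i + q)z)/(1 - x_i z). -/
/-!
Multiplying by `∏ᵢ (1 - xᵢ z)` turns the claim into the polynomial identity
`∏ⱼ (1 - xⱼ z) - ∏ⱼ (1 - (xⱼ + q) z) = q z ∑ᵢ wᵢ ∏_{j ≠ i} (1 - xⱼ z)`, where `wᵢ` is the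
coefficient of `xᵢᵏ` in `m_k^{(q)}`. Reflecting it (`z ↦ 1/X`, times `X^N`) gives
`∏ⱼ (X - xⱼ) - ∏ⱼ (X - xⱼ - q) = q ∑ᵢ wᵢ ∏_{j ≠ i} (X - xⱼ)`: the left side has degree `< N`
and takes the value `q ∏_{j ≠ i} (xᵢ - xⱼ - q)` at `xᵢ`, so this is Lagrange interpolation.
-/

open Finset PowerSeries

namespace Polynomial

variable {R : Type*} [CommRing R]

theorem reflect_X_sub_C (a : R) : reflect 1 (X - C a) = 1 - C a * X := by
  rw [reflect_sub, reflect_one_X, reflect_C, pow_one]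

theorem reflect_finsetSum {ι : Type*} (N : ℕ) (s : Finset ι) (f : ι → R[X]) :
    reflect N (∑ i ∈ s, f i) = ∑ i ∈ s, reflect N (f i) :=
  map_sum (AddMonoidHom.mk' (reflect N) fun f g => reflect_add f g N) f s

theorem reflect_add_one {f : R[X]} {n : ℕ} (hf : f.natDegree ≤ n) :
    reflect (n + 1) f = reflect n f * X := by
  simpa using reflect_mul f 1 hf (natDegree_one.trans_le zero_le_one) (G := 1)

theorem natDegree_prod_X_sub_C_le {ι : Type*} (s : Finset ι) (a : ι → R) :
    (∏ j ∈ s, (X - C (a j))).natDegree ≤ #s :=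
  (natDegree_prod_le _ _).trans <| by
    simpa using sum_le_card_nsmul s _ 1 fun j _ => natDegree_X_sub_C_le (a j)

theorem reflect_prod_X_sub_C {ι : Type*} (s : Finset ι) (a : ι → R) :
    reflect #s (∏ j ∈ s, (X - C (a j))) = ∏ j ∈ s, (1 - C (a j) * X) := by
  classical
  induction s using Finset.induction_on with
  | empty => simp [reflect_one]
  | insert i s hi ih =>
    rw [prod_insert hi, prod_insert hi, card_insert_of_notMem hi, add_comm,
      reflect_mul _ _ (natDegree_X_sub_C_le _) (natDegree_prod_X_sub_C_le _ _),
      reflect_X_sub_C, ih]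

theorem degree_prod_X_sub_C_sub_prod_X_sub_C_lt [Nontrivial R] {ι : Type*} (s : Finset ι)
    (a b : ι → R) :
    (∏ j ∈ s, (X - C (a j)) - ∏ j ∈ s, (X - C (b j))).degree < (#s : WithBot ℕ) := by
  have hdeg (c : ι → R) : (∏ j ∈ s, (X - C (c j))).degree = (#s : WithBot ℕ) := by
    rw [degree_eq_natDegree (monic_prod_X_sub_C c s).ne_zero,
      natDegree_finsetProd_X_sub_C_eq_card]
  rw [← hdeg a]
  exact degree_sub_lt_left ((hdeg a).trans (hdeg b).symm) (monic_prod_X_sub_C a s).ne_zero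
    ((monic_prod_X_sub_C a s).leadingCoeff.trans (monic_prod_X_sub_C b s).leadingCoeff.symm)

end Polynomial

theorem Lagrange.basis_eq_C_mul_prod {ι F : Type*} [DecidableEq ι] [Field F] (s : Finset ι)
    (v : ι → F) (i : ι) :
    Lagrange.basis s v i = Polynomial.C (∏ j ∈ s.erase i, (v i - v j))⁻¹ *
      ∏ j ∈ s.erase i, (Polynomial.X - Polynomial.C (v j)) := by
  rw [Lagrange.basis, ← prod_inv_distrib, map_prod, ← prod_mul_distrib]
  rfl

namespace PowerSeries

theorem mk_pow_mul_one_sub_C_mul_X {R : Type*} [CommRing R] (a : R) :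
    (mk fun n => a ^ n) * (1 - C a * X) = 1 := by
  simpa [rescale_mk, rescale_X] using congrArg (rescale a) (mk_one_mul_one_sub_eq_one (S := R))

variable {K : Type*} [Field K]

theorem inv_one_sub_C_mul_X (a : K) : (1 - C a * X)⁻¹ = mk fun n => a ^ n :=
  (PowerSeries.inv_eq_iff_mul_eq_one (by simp)).mpr (mk_pow_mul_one_sub_C_mul_X a)

theorem one_sub_C_mul_X_mul_inv (a : K) : (1 - C a * X) * (1 - C a * X)⁻¹ = 1 :=
  PowerSeries.mul_inv_cancel _ (by simp)

theorem mk_sum_mul_pow_eq_sum_X_mul_inv {ι : Type*} [Fintype ι] (c a : ι → K) :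
    (mk fun n => if n = 0 then 0 else ∑ i, c i * a i ^ (n - 1)) =
      ∑ i, C (c i) * (X * (1 - C (a i) * X)⁻¹) := by
  ext (_ | n) <;> simp [map_sum, coeff_C_mul, coeff_succ_X_mul, inv_one_sub_C_mul_X]

end PowerSeries

section

variable {ι K : Type*} [Fintype ι] [DecidableEq ι] [Field K]

/-- `m_k^{(q)}(x) = ∑ i, qWeight x q i * x i ^ k`. -/
def qWeight (x : ι → K) (q : K) (i : ι) : K :=
  ∏ j ∈ univ.erase i, (x i - x j - q) / (x i - x j)

namespace Polynomial

theorem eval_prod_X_sub_C_sub_prod_X_sub_C_add (x : ι → K) (q : K) (i : ι) :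
    (∏ j, (X - C (x j)) - ∏ j, (X - C (x j + q))).eval (x i) =
      q * ∏ j ∈ univ.erase i, (x i - x j - q) := by
  simp only [eval_sub, eval_prod, eval_X, eval_C]
  rw [← mul_prod_erase univ _ (mem_univ i), ← mul_prod_erase univ _ (mem_univ i), sub_self,
    zero_mul]
  simp only [sub_add_eq_sub_sub]
  ring

theorem prod_X_sub_C_sub_prod_X_sub_C_add_eq_sum {x : ι → K} (hx : Function.Injective x)
    (q : K) :
    ∏ j, (X - C (x j)) - ∏ j, (X - C (x j + q)) =
      ∑ i, C (q * qWeight x q i) * ∏ j ∈ univ.erase i, (X - C (x j)) := by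
  rw [Lagrange.eq_interpolate_of_eval_eq _ hx.injOn
    (degree_prod_X_sub_C_sub_prod_X_sub_C_lt _ _ _)
    fun i _ => eval_prod_X_sub_C_sub_prod_X_sub_C_add x q i, Lagrange.interpolate_apply]
  refine sum_congr rfl fun i _ => ?_
  rw [Lagrange.basis_eq_C_mul_prod, ← mul_assoc, ← C_mul, qWeight, prod_div_distrib,
    mul_div_assoc', div_eq_mul_inv]

theorem prod_one_sub_C_mul_X_sub_prod_eq_sum {x : ι → K} (hx : Function.Injective x) (q : K) :
    ∏ j, (1 - C (x j) * X) - ∏ j, (1 - C (x j + q) * X) =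
      ∑ i, C (q * qWeight x q i) * ((∏ j ∈ univ.erase i, (1 - C (x j) * X)) * X) := by
  have h := congrArg (reflect #(univ : Finset ι)) (prod_X_sub_C_sub_prod_X_sub_C_add_eq_sum hx q)
  rw [reflect_sub, reflect_prod_X_sub_C, reflect_prod_X_sub_C, reflect_finsetSum] at h
  refine h.trans (sum_congr rfl fun i hi => ?_)
  rw [reflect_C_mul, ← card_erase_add_one hi, reflect_add_one (natDegree_prod_X_sub_C_le _ _),
    reflect_prod_X_sub_C]

end Polynomial

namespace PowerSeries

theorem prod_one_sub_C_mul_X_sub_prod_eq_sum {x : ι → K} (hx : Function.Injective x) (q : K) :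
    ∏ j, (1 - C (x j) * X) - ∏ j, (1 - C (x j + q) * X) =
      ∑ i, C (q * qWeight x q i) * ((∏ j ∈ univ.erase i, (1 - C (x j) * X)) * X) := by
  simpa only [map_sub, map_sum, map_prod, map_mul, map_one,
    Polynomial.coeToPowerSeries.ringHom_apply, Polynomial.coe_C, Polynomial.coe_X] using
    congrArg Polynomial.coeToPowerSeries.ringHom
      (Polynomial.prod_one_sub_C_mul_X_sub_prod_eq_sum hx q)

theorem prod_mul_inv_eq_one_sub_sum {x : ι → K} (hx : Function.Injective x) (q : K) :
    ∏ i, (1 - C (x i + q) * X) * (1 - C (x i) * X)⁻¹ =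
      1 - ∑ i, C (q * qWeight x q i) * (X * (1 - C (x i) * X)⁻¹) := by
  have cancel (s : Finset ι) :
      (∏ j ∈ s, (1 - C (x j) * X)) * ∏ j ∈ s, (1 - C (x j) * X)⁻¹ = 1 := by
    rw [← prod_mul_distrib]
    exact prod_eq_one fun j _ => one_sub_C_mul_X_mul_inv (x j)
  rw [prod_mul_distrib, ← sub_sub_cancel (∏ j, (1 - C (x j) * X)) (∏ j, (1 - C (x j + q) * X)),
    prod_one_sub_C_mul_X_sub_prod_eq_sum hx, sub_mul, cancel, sum_mul]
  refine congrArg (1 - ·) (sum_congr rfl fun i hi => ?_)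
  rw [← mul_prod_erase univ (fun j => (1 - C (x j) * X)⁻¹) hi]
  linear_combination (C (q * qWeight x q i) * X * (1 - C (x i) * X)⁻¹) * cancel (univ.erase i)

end PowerSeries

end

/-- Generating function of the symmetric rational functions
`m_k^{(q)}(x) = Σᵢ (∏_{j≠i} (xᵢ-xⱼ-q)/(xᵢ-xⱼ)) xᵢᵏ`:
as formal power series in `z`,
`Σ_{k≥0} m_k^{(q)}(x) z^{k+1} = 1/q - (1/q) ∏ᵢ (1-(xᵢ+q)z)/(1-xᵢz)`. -/
theorem qPP_generating_function (N : ℕ) (x : Fin N → ℝ) (hx : Function.Injective x)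
    (q : ℝ) (hq : q ≠ 0) :
    (PowerSeries.mk fun n => if n = 0 then 0 else
      ∑ i, (∏ j ∈ Finset.univ.erase i, (x i - x j - q) / (x i - x j)) * x i ^ (n - 1)) =
    PowerSeries.C (R := ℝ) (1 / q) - PowerSeries.C (R := ℝ) (1 / q) *
      ∏ i, ((1 - PowerSeries.C (R := ℝ) (x i + q) * PowerSeries.X) *
        (1 - PowerSeries.C (R := ℝ) (x i) * PowerSeries.X)⁻¹) := by
  change (mk fun n => if n = 0 then 0 else ∑ i, qWeight x q i * x i ^ (n - 1)) = _
  rw [mk_sum_mul_pow_eq_sum_X_mul_inv, prod_mul_inv_eq_one_sub_sum hx, mul_sub, mul_one,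
    sub_sub_cancel, mul_sum]
  refine sum_congr rfl fun i _ => ?_
  simp only [← mul_assoc, ← map_mul, one_div, inv_mul_cancel_left₀ hq]
end

section
/- Let x_1, ..., x_N be distinct variables and q ≠ 0. Then the generating function identity Σ_{k≥0} m_k^{(q)}(x) z^{k+1} = 1/q - (1/q)·exp( Σ_{k≥1} (p_k(x_1,...,x_N) - p_k(x_1+q,...,x_N+q)) z^k / k ) holds as formal power series in z, where p_k denotes the k-th power sum and m_k^{(q)}(x) = Σ_i (∏_{j≠i}(x_i - x_j - q)/(x_i - x_j)) x_i^k. -/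
/-!
The exponent is `∑ i, (L (x i) - L (x i + q))` with `L a = -log (1 - a z)`, so the exponential is
the rational function `∏ i, (1 - (x i + q) z) / (1 - x i z)`. Lagrange interpolation of the
polynomial `∏ j, (t - x j) - ∏ j, (t - x j - q)`, of degree `< N`, at the nodes `x i`, followed by
the substitution `t = 1 / z`, gives the partial fraction expansion
`1 - ∏ i, (1 - (x i + q) z) / (1 - x i z) = q z ∑ i, c i / (1 - x i z)`, where `c i` is the
weight of `x i ^ k` in `m_k^{(q)}(x)`. The exponential of a sum is the product of exponentials
because both sides solve the same linear formal differential equation.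
-/

open Finset PowerSeries

/-- Exponential of a formal power series (with zero constant term):
`exp f = Σ_k f^k / k!`, coefficientwise a finite sum. -/
noncomputable def expPS (f : PowerSeries ℝ) : PowerSeries ℝ :=
  PowerSeries.mk fun n =>
    ∑ k ∈ Finset.range (n + 1), PowerSeries.coeff n (f ^ k) / (Nat.factorial k : ℝ)

section PartialFractions

open Polynomial hiding C X
open Lagrange

variable {F ι : Type*} [Field F] [DecidableEq ι] {s : Finset ι} {v : ι → F}

/-- `m_k^{(q)}(x) = ∑ i, shiftWeight univ x q i * x i ^ k`. -/
def shiftWeight (s : Finset ι) (v : ι → F) (q : F) (i : ι) : F :=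
  ∏ j ∈ s.erase i, (v i - v j - q) / (v i - v j)

omit [DecidableEq ι] in
theorem degree_nodal_sub_nodal_lt {R : Type*} [CommRing R] [Nontrivial R] (s : Finset ι)
    (v w : ι → R) : (nodal s v - nodal s w).degree < #s := by
  rw [← degree_nodal (v := v)]
  exact degree_sub_lt_left (by rw [degree_nodal, degree_nodal]) nodal_ne_zero
    (by rw [nodal_monic.leadingCoeff, nodal_monic.leadingCoeff])

theorem nodal_sub_nodal_add_const (hvs : Set.InjOn v s) (q : F) :
    nodal s v - nodal s (v · + q) = q • ∑ i ∈ s, shiftWeight s v q i • nodal (s.erase i) v := by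
  rw [eq_interpolate hvs (degree_nodal_sub_nodal_lt s _ _), interpolate_apply, smul_sum]
  refine sum_congr rfl fun i hi => ?_
  have hvi : (nodal s v - nodal s (v · + q)).eval (v i) = q * ∏ j ∈ s.erase i, (v i - v j - q) := by
    rw [eval_sub, eval_nodal_at_node hi, eval_nodal, ← mul_prod_erase _ _ hi]
    simp_rw [sub_add_eq_sub_sub]
    ring
  rw [hvi, Lagrange.basis, nodal, shiftWeight]
  simp only [basisDivisor, prod_mul_distrib, map_prod, map_mul, div_eq_mul_inv,
    Polynomial.smul_eq_C_mul]
  ring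

omit [DecidableEq ι] in
theorem pow_card_mul_eval_nodal_inv {z : F} (hz : z ≠ 0) (s : Finset ι) (v : ι → F) :
    z ^ #s * (nodal s v).eval z⁻¹ = ∏ j ∈ s, (1 - v j * z) := by
  rw [eval_nodal, pow_card_mul_prod]
  refine prod_congr rfl fun j _ => ?_
  field_simp

theorem Polynomial.prod_one_sub_smul_X_sub_prod [Infinite F] (hvs : Set.InjOn v s) (q : F) :
    ∏ j ∈ s, (1 - v j • (Polynomial.X : F[X])) - ∏ j ∈ s, (1 - (v j + q) • (Polynomial.X : F[X])) =
      q • (Polynomial.X : F[X]) *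
        ∑ i ∈ s, shiftWeight s v q i • ∏ j ∈ s.erase i, (1 - v j • (Polynomial.X : F[X])) := by
  refine Polynomial.funext fun z => ?_
  simp only [eval_sub, eval_mul, eval_prod, eval_finsetSum, eval_one, eval_smul, eval_X,
    smul_eq_mul]
  rcases eq_or_ne z 0 with rfl | hz
  · simp
  calc ∏ j ∈ s, (1 - v j * z) - ∏ j ∈ s, (1 - (v j + q) * z)
      = z ^ #s * (nodal s v - nodal s (v · + q)).eval z⁻¹ := by
        rw [eval_sub, mul_sub, pow_card_mul_eval_nodal_inv hz, pow_card_mul_eval_nodal_inv hz]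
    _ = q * ∑ i ∈ s, shiftWeight s v q i * (z ^ #s * (nodal (s.erase i) v).eval z⁻¹) := by
        rw [nodal_sub_nodal_add_const hvs]
        simp only [eval_smul, eval_finsetSum, smul_eq_mul, mul_sum]
        exact sum_congr rfl fun i _ => by ring
    _ = q * z * ∑ i ∈ s, shiftWeight s v q i * ∏ j ∈ s.erase i, (1 - v j * z) := by
        rw [mul_assoc]
        congr 1
        rw [mul_sum]
        refine sum_congr rfl fun i hi => ?_
        rw [← pow_card_mul_eval_nodal_inv hz, ← card_erase_add_one hi, pow_succ]
        ring

theorem PowerSeries.prod_one_sub_smul_X_sub_prod [Infinite F] (hvs : Set.InjOn v s) (q : F) :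
    ∏ j ∈ s, (1 - v j • X) - ∏ j ∈ s, (1 - (v j + q) • X) =
      q • X * ∑ i ∈ s, shiftWeight s v q i • ∏ j ∈ s.erase i, (1 - v j • (X : F⟦X⟧)) := by
  simpa [map_sub, map_prod, map_mul, map_sum, map_smul, map_one, coeToPowerSeries.algHom_apply]
    using congrArg (coeToPowerSeries.algHom F) (Polynomial.prod_one_sub_smul_X_sub_prod hvs q)

end PartialFractions

theorem eq_of_derivative_eq_mul {R : Type*} [CommRing R] [IsAddTorsionFree R] {h f g : R⟦X⟧}
    (h0 : constantCoeff f = constantCoeff g) (hf : d⁄dX R f = h * f) (hg : d⁄dX R g = h * g) :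
    f = g := by
  ext n
  induction n using Nat.strong_induction_on with
  | _ n ih =>
    cases n with
    | zero => simpa using h0
    | succ m =>
      have hmul : coeff m (h * f) = coeff m (h * g) := by
        simp only [coeff_mul]
        exact sum_congr rfl fun p hp => by rw [ih p.2 (by linarith [mem_antidiagonal.mp hp])]
      have key : (m + 1) • coeff (m + 1) f = (m + 1) • coeff (m + 1) g := by
        simp only [nsmul_eq_mul, Nat.cast_add_one, mul_comm _ (coeff (m + 1) _)]
        rw [← coeff_derivative, ← coeff_derivative, hf, hg, hmul]
      exact (smul_right_inj (Nat.succ_ne_zero m)).mp key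

theorem expPS_eq_subst_exp {f : ℝ⟦X⟧} (hf : constantCoeff f = 0) :
    expPS f = (exp ℝ).subst f := by
  ext n
  rw [expPS, coeff_mk, coeff_subst' (HasSubst.of_constantCoeff_zero' hf),
    finsum_eq_sum_of_support_subset (s := range (n + 1))]
  · refine sum_congr rfl fun k _ => ?_
    simp [div_eq_inv_mul]
  · intro k hk
    by_contra hkn
    have hnk : (n : ℕ∞) < (f ^ k).order := (Nat.cast_lt.mpr (by simpa using hkn)).trans_le
      (le_order_pow_of_constantCoeff_eq_zero k hf)
    exact hk (by simp [coeff_of_lt_order n hnk])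

theorem constantCoeff_expPS (f : ℝ⟦X⟧) : constantCoeff (expPS f) = 1 := by
  rw [← coeff_zero_eq_constantCoeff_apply, expPS, coeff_mk]
  simp

theorem derivative_expPS {f : ℝ⟦X⟧} (hf : constantCoeff f = 0) :
    d⁄dX ℝ (expPS f) = d⁄dX ℝ f * expPS f := by
  rw [expPS_eq_subst_exp hf, derivative_subst (HasSubst.of_constantCoeff_zero' hf),
    derivative_exp, mul_comm]

theorem expPS_zero : expPS 0 = 1 :=
  eq_of_derivative_eq_mul (h := 0) (by rw [constantCoeff_expPS, map_one])
    (by rw [derivative_expPS (map_zero _), map_zero, zero_mul]) (by simp)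

theorem expPS_add {f g : ℝ⟦X⟧} (hf : constantCoeff f = 0) (hg : constantCoeff g = 0) :
    expPS (f + g) = expPS f * expPS g := by
  refine eq_of_derivative_eq_mul (h := d⁄dX ℝ (f + g)) ?_ ?_ ?_
  · simp [constantCoeff_expPS]
  · exact derivative_expPS (by rw [map_add, hf, hg, add_zero])
  · rw [Derivation.leibniz, derivative_expPS hf, derivative_expPS hg, map_add, smul_eq_mul,
      smul_eq_mul]
    ring

theorem expPS_sum {ι : Type*} (s : Finset ι) {f : ι → ℝ⟦X⟧}
    (hf : ∀ i ∈ s, constantCoeff (f i) = 0) :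
    expPS (∑ i ∈ s, f i) = ∏ i ∈ s, expPS (f i) := by
  induction s using Finset.cons_induction with
  | empty => exact expPS_zero
  | cons i s _ ih =>
    rw [forall_mem_cons] at hf
    rw [sum_cons, prod_cons, expPS_add hf.1 (by rw [map_sum]; exact sum_eq_zero hf.2), ih hf.2]

section GeometricSeries

variable {R : Type*} [CommRing R]

def geom (a : R) : R⟦X⟧ := mk fun n => a ^ n

theorem one_sub_smul_X_mul_geom (a : R) : (1 - a • X) * geom a = 1 := by
  have hgeom : geom a = rescale a (mk 1) := by
    ext n
    simp [geom, coeff_rescale]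
  rw [hgeom, smul_eq_C_mul, ← rescale_X, ← map_one (rescale a), ← map_sub, ← map_mul, mul_comm,
    mk_one_mul_one_sub_eq_one]

theorem derivative_geom (a : R) : d⁄dX R (geom a) = a • geom a * geom a := by
  have hD : (1 - a • X) * d⁄dX R (geom a) = a • geom a := by
    have h := congrArg (d⁄dX R) (one_sub_smul_X_mul_geom a)
    rw [Derivation.leibniz, Derivation.map_one_eq_zero, map_sub, Derivation.map_one_eq_zero,
      Derivation.map_smul, derivative_X, smul_eq_mul, smul_eq_mul] at h
    simp only [smul_eq_C_mul] at h ⊢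
    linear_combination h
  calc d⁄dX R (geom a) = (1 - a • X) * geom a * d⁄dX R (geom a) := by
        rw [one_sub_smul_X_mul_geom, one_mul]
    _ = a • geom a * geom a := by
        rw [mul_comm (1 - a • X), mul_assoc, hD, mul_comm]

theorem prod_one_sub_smul_X_mul_prod_geom {ι : Type*} (s : Finset ι) (v : ι → R) :
    (∏ j ∈ s, (1 - v j • X)) * ∏ j ∈ s, geom (v j) = 1 := by
  rw [← prod_mul_distrib]
  exact prod_eq_one fun j _ => one_sub_smul_X_mul_geom (v j)

end GeometricSeries

section LogarithmicSeries

variable {K : Type*} [Field K]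

/-- `-log (1 - a X)`. -/
def logGeom (a : K) : K⟦X⟧ := mk fun n => if n = 0 then 0 else a ^ n / n

theorem constantCoeff_logGeom (a : K) : constantCoeff (logGeom a) = 0 := by
  rw [← coeff_zero_eq_constantCoeff_apply, logGeom, coeff_mk, if_pos rfl]

theorem derivative_logGeom [CharZero K] (a : K) :
    d⁄dX K (logGeom a) = a • geom a := by
  ext n
  rw [coeff_derivative, logGeom, coeff_mk, if_neg n.succ_ne_zero, coeff_smul, geom, coeff_mk]
  push_cast
  field_simp
  ring

end LogarithmicSeries

theorem expPS_logGeom (a : ℝ) : expPS (logGeom a) = geom a :=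
  eq_of_derivative_eq_mul (h := a • geom a)
    (by rw [constantCoeff_expPS, ← coeff_zero_eq_constantCoeff_apply, geom, coeff_mk, pow_zero])
    (by rw [derivative_expPS (constantCoeff_logGeom a), derivative_logGeom]) (derivative_geom a)

theorem expPS_logGeom_sub_logGeom (a b : ℝ) :
    expPS (logGeom a - logGeom b) = geom a * (1 - b • X) := by
  have hab : constantCoeff (logGeom a - logGeom b) = 0 := by
    rw [map_sub, constantCoeff_logGeom, constantCoeff_logGeom, sub_zero]
  calc expPS (logGeom a - logGeom b)
      = expPS (logGeom a - logGeom b) * geom b * (1 - b • X) := by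
        rw [mul_assoc, mul_comm (geom b), one_sub_smul_X_mul_geom, mul_one]
    _ = geom a * (1 - b • X) := by
        rw [← expPS_logGeom b, ← expPS_add hab (constantCoeff_logGeom b), sub_add_cancel,
          expPS_logGeom]

theorem one_sub_prod_geom_mul_one_sub {F ι : Type*} [Field F] [Infinite F] [DecidableEq ι]
    {s : Finset ι} {v : ι → F} (hvs : Set.InjOn v s) (q : F) :
    1 - ∏ j ∈ s, geom (v j) * (1 - (v j + q) • X) =
      q • X * ∑ i ∈ s, shiftWeight s v q i • geom (v i) := by
  have herase : ∀ i ∈ s, (∏ j ∈ s.erase i, (1 - v j • X)) * ∏ j ∈ s, geom (v j) = geom (v i) :=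
    fun i hi => by
      rw [← mul_prod_erase s _ hi, mul_left_comm, prod_one_sub_smul_X_mul_prod_geom, mul_one]
  calc 1 - ∏ j ∈ s, geom (v j) * (1 - (v j + q) • X)
      = (∏ j ∈ s, (1 - v j • X) - ∏ j ∈ s, (1 - (v j + q) • X)) * ∏ j ∈ s, geom (v j) := by
        rw [sub_mul, prod_one_sub_smul_X_mul_prod_geom, prod_mul_distrib, mul_comm]
    _ = q • X * ∑ i ∈ s, shiftWeight s v q i • geom (v i) := by
        rw [PowerSeries.prod_one_sub_smul_X_sub_prod hvs, mul_assoc, sum_mul]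
        simp only [smul_mul_assoc]
        rw [sum_congr rfl fun i hi => by rw [herase i hi]]

/-- Generating function of `m_k^{(q)}` in terms of power sums:
`Σ_{k≥0} m_k^{(q)}(x) z^{k+1}
  = 1/q - (1/q)·exp( Σ_{k≥1} (p_k(x) - p_k(x+q)) z^k / k )`. -/
theorem qPP_generating_function_powersums (N : ℕ) (x : Fin N → ℝ)
    (hx : Function.Injective x) (q : ℝ) (hq : q ≠ 0) :
    (PowerSeries.mk fun n => if n = 0 then 0 else
      ∑ i, (∏ j ∈ Finset.univ.erase i, (x i - x j - q) / (x i - x j)) * x i ^ (n - 1)) =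
    PowerSeries.C (1 / q) - PowerSeries.C (1 / q) *
      expPS (PowerSeries.mk fun k => if k = 0 then 0 else
        ((∑ i, x i ^ k) - ∑ i, (x i + q) ^ k) / (k : ℝ)) := by
  have hseries : (mk fun n => if n = 0 then 0 else
      ∑ i, (∏ j ∈ univ.erase i, (x i - x j - q) / (x i - x j)) * x i ^ (n - 1)) =
      X * ∑ i, shiftWeight univ x q i • geom (x i) := by
    ext (_ | n)
    · simp
    · simp [coeff_succ_X_mul, shiftWeight, geom]
  have hexponent : (mk fun k => if k = 0 then 0 else
      ((∑ i, x i ^ k) - ∑ i, (x i + q) ^ k) / (k : ℝ)) =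
      ∑ i, (logGeom (x i) - logGeom (x i + q)) := by
    ext (_ | n)
    · simp [logGeom]
    · simp [logGeom, sum_sub_distrib, sub_div, sum_div]
  rw [hseries, hexponent, expPS_sum _ fun i _ => by simp [constantCoeff_logGeom]]
  simp_rw [expPS_logGeom_sub_logGeom]
  rw [← mul_one_sub, one_sub_prod_geom_mul_one_sub hx.injOn, smul_mul_assoc, ← smul_eq_C_mul,
    smul_smul, one_div_mul_cancel hq, one_smul]
end

section
/- For distinct variables x_1, ..., x_N, q ≠ 0, and k ≥ 0, the function m_k^{(q)}(x) = Σ_i (∏_{j≠i}(x_i - x_j - q)/(x_i - x_j)) x_i^k equals Σ_{l=1}^N ((-q)^{l-1}/l!) Σ over distinct indices i(1),...,i(l) of h_{k-l+1}(x_{i(1)},...,x_{i(l)}), where h_m is the complete homogeneous symmetric polynomial of degree m (with h_m = 0 for m < 0). In particular m_k^{(q)} is a symmetric polynomial in x_1, ..., x_N. -/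
/-!
Since `(x_i - x_j - q) / (x_i - x_j) = 1 - q / (x_i - x_j)`, expanding the product over `j ≠ i`
and collecting terms by the set `t = {i} ∪ S` of indices involved writes `m_k^{(q)}` as
`∑_t (-q)^(|t|-1) f[x_t]`, where `f[x_t] = ∑_{i ∈ t} x_i^k / ∏_{j ∈ t, j ≠ i} (x_i - x_j)` is the
divided difference of `X^k` at the nodes `x_t`. That divided difference is `h_{k+1-|t|}(x_t)`,
and `0` when `|t| > k + 1`: both sides satisfy `f[x_{t∖a}] - f[x_{t∖b}] = (x_b - x_a) f[x_t]`
and they agree on at most one node. A sum over injective `l`-tuples counts every `l`-set `l!`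
times. Symmetry is a reindexing of the sum by the permutation.
-/

open Finset
open scoped Nat

namespace Finset

lemma sum_sum_powerset_erase_insert {ι M : Type*} [DecidableEq ι] [AddCommMonoid M]
    (s : Finset ι) (G : ι → Finset ι → M) :
    ∑ i ∈ s, ∑ u ∈ (s.erase i).powerset, G i (insert i u) = ∑ t ∈ s.powerset, ∑ i ∈ t, G i t := by
  have hsplit : ∀ t ∈ s.powerset, ∑ i ∈ t, G i t = ∑ i ∈ s, if i ∈ t then G i t else 0 :=
    fun t ht => by rw [sum_ite_mem, inter_eq_right.mpr (mem_powerset.mp ht)]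
  rw [sum_congr rfl hsplit, sum_comm]
  refine sum_congr rfl fun i hi => ?_
  rw [← insert_erase hi, sum_powerset_insert (notMem_erase i s), erase_insert (notMem_erase i s)]
  have hout : ∀ t ∈ (s.erase i).powerset, (if i ∈ t then G i t else 0) = 0 := fun t ht =>
    if_neg fun h => notMem_erase i s (mem_powerset.mp ht h)
  rw [sum_eq_zero hout, zero_add]
  exact sum_congr rfl fun u _ => (if_pos (mem_insert_self i u)).symm

lemma sum_powerset_eq_sum_Icc_powersetCard {ι M : Type*} [AddCommMonoid M] (s : Finset ι)
    {g : Finset ι → M} (hg : g ∅ = 0) :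
    ∑ t ∈ s.powerset, g t = ∑ l ∈ Icc 1 #s, ∑ t ∈ powersetCard l s, g t := by
  rw [sum_powerset, range_eq_Ico, sum_eq_sum_Ico_succ_bot (Nat.succ_pos _), powersetCard_zero,
    sum_singleton, hg, zero_add, zero_add, Nat.succ_eq_add_one, Ico_add_one_right_eq_Icc]

lemma prod_univ_erase_comp_equiv {ι κ M : Type*} [Fintype ι] [Fintype κ] [DecidableEq ι]
    [DecidableEq κ] [CommMonoid M] (e : ι ≃ κ) (i : ι) (g : κ → M) :
    ∏ j ∈ univ.erase i, g (e j) = ∏ j ∈ univ.erase (e i), g j :=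
  prod_equiv e (by simp) fun _ _ => rfl

section InjectiveTuples

variable {ι : Type*} [Fintype ι] [DecidableEq ι]

lemma card_filter_injective_image_eq {l : ℕ} {t : Finset ι} (ht : #t = l) :
    #{f : Fin l → ι | Function.Injective f ∧ univ.image f = t} = l ! := by
  have e : Fin l ≃ t := Fintype.equivOfCardEq (by simp [ht])
  rw [show l ! = Fintype.card (Fin l ≃ t) by rw [Fintype.card_equiv e, Fintype.card_fin],
    ← card_univ]
  symm
  refine card_bij (fun g _ => Subtype.val ∘ g) (fun g _ => ?_) (fun g _ g' _ h => ?_)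
    (fun f hf => ?_)
  · refine mem_filter.mpr ⟨mem_univ _, Subtype.val_injective.comp g.injective, ?_⟩
    ext i
    simp only [mem_image, mem_univ, true_and, Function.comp_apply]
    refine ⟨fun ⟨a, ha⟩ => ha ▸ (g a).2, fun hi => ?_⟩
    obtain ⟨a, ha⟩ := g.surjective ⟨i, hi⟩
    exact ⟨a, congrArg Subtype.val ha⟩
  · exact Equiv.ext fun a => Subtype.ext (congrFun h a)
  · obtain ⟨hf, him⟩ := (mem_filter.mp hf).2
    have hmem : ∀ a, f a ∈ t := fun a => him ▸ mem_image_of_mem f (mem_univ a)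
    refine ⟨Equiv.ofBijective (fun a => ⟨f a, hmem a⟩) ⟨fun a b h => hf (congrArg Subtype.val h),
      fun i => ?_⟩, mem_univ _, rfl⟩
    obtain ⟨a, -, ha⟩ := mem_image.mp (him.symm ▸ i.2 : (i : ι) ∈ univ.image f)
    exact ⟨a, Subtype.ext ha⟩

lemma sum_filter_injective_image {M : Type*} [AddCommMonoid M] (l : ℕ) (Φ : Finset ι → M) :
    ∑ f : Fin l → ι with Function.Injective f, Φ (univ.image f) =
      l ! • ∑ t ∈ powersetCard l univ, Φ t := by
  have hmaps : ∀ f ∈ ({f : Fin l → ι | Function.Injective f} : Finset _),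
      univ.image f ∈ powersetCard l univ := fun f hf =>
    mem_powersetCard.mpr ⟨subset_univ _, by
      rw [card_image_of_injective _ (mem_filter.mp hf).2, card_univ, Fintype.card_fin]⟩
  rw [← sum_fiberwise_of_maps_to hmaps, smul_sum]
  refine sum_congr rfl fun t ht => ?_
  rw [sum_congr rfl fun f hf => congrArg Φ (mem_filter.mp hf).2, sum_const, filter_filter,
    card_filter_injective_image_eq (mem_powersetCard.mp ht).2]

end InjectiveTuples

end Finset

section CompleteHomogeneous

variable {R ι : Type*} [CommSemiring R] [DecidableEq ι] (x : ι → R)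

def completeHomogeneous (s : Finset ι) (m : ℕ) : R :=
  ∑ c ∈ s.piAntidiag m, ∏ i ∈ s, x i ^ c i

lemma completeHomogeneous_zero (s : Finset ι) : completeHomogeneous x s 0 = 1 := by
  simp [completeHomogeneous]

lemma completeHomogeneous_empty_succ (m : ℕ) : completeHomogeneous x ∅ (m + 1) = 0 := by
  simp [completeHomogeneous]

lemma completeHomogeneous_cons {a : ι} {s : Finset ι} (ha : a ∉ s) (m : ℕ) :
    completeHomogeneous x (s.cons a ha) m =
      ∑ p ∈ antidiagonal m, x a ^ p.1 * completeHomogeneous x s p.2 := by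
  simp only [completeHomogeneous, piAntidiag_cons, sum_disjiUnion, sum_map, prod_cons, mul_sum,
    addRightEmbedding_apply, Pi.add_apply, if_pos]
  refine sum_congr rfl fun p _ => sum_congr rfl fun c hc => ?_
  have hca : c a = 0 := by
    by_contra h
    exact ha ((mem_piAntidiag.mp hc).2 a h)
  rw [hca, zero_add]
  congr 1
  refine prod_congr rfl fun i hi => ?_
  rw [if_neg (ne_of_mem_of_not_mem hi ha), add_zero]

lemma completeHomogeneous_singleton (a : ι) (m : ℕ) :
    completeHomogeneous x {a} m = x a ^ m := by
  rw [← cons_empty a, completeHomogeneous_cons, sum_eq_single (m, 0)]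
  · simp [completeHomogeneous_zero]
  · rintro ⟨i, _ | j⟩ hij hne
    · simp_all
    · rw [completeHomogeneous_empty_succ, mul_zero]
  · simp

lemma completeHomogeneous_succ_of_mem {a : ι} {s : Finset ι} (ha : a ∈ s) (m : ℕ) :
    completeHomogeneous x s (m + 1) =
      completeHomogeneous x (s.erase a) (m + 1) + x a * completeHomogeneous x s m := by
  obtain ⟨t, hat, rfl⟩ : ∃ t, ∃ hat : a ∉ t, s = t.cons a hat :=
    ⟨s.erase a, notMem_erase a s, by simp [insert_erase ha]⟩
  rw [erase_cons, completeHomogeneous_cons, completeHomogeneous_cons, Nat.sum_antidiagonal_succ,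
    mul_sum]
  simp only [pow_zero, one_mul, pow_succ, mul_assoc, mul_left_comm (x a)]

lemma completeHomogeneous_univ_fin {l : ℕ} (y : Fin l → R) (m : ℕ) :
    completeHomogeneous y univ m = ∑ c ∈ Nat.antidiagonalTuple l m, ∏ j, y j ^ c j := by
  rw [completeHomogeneous, piAntidiag_univ_fin_eq_antidiagonalTuple]

end CompleteHomogeneous

section DividedDifference

open Lagrange

variable {K ι : Type*} [Field K] [DecidableEq ι] {x : ι → K} {s : Finset ι}

def divDiff (f : K → K) (x : ι → K) (s : Finset ι) : K :=
  ∑ i ∈ s, f (x i) * nodalWeight s x i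

lemma nodalWeight_erase (hx : Set.InjOn x s) {a i : ι} (ha : a ∈ s) (hi : i ∈ s) (hia : i ≠ a) :
    nodalWeight (s.erase a) x i = (x i - x a) * nodalWeight s x i := by
  have hxia : x i - x a ≠ 0 := sub_ne_zero.mpr fun h => hia (hx hi ha h)
  rw [nodalWeight, nodalWeight, ← mul_prod_erase (s.erase i) _ (mem_erase.mpr ⟨hia.symm, ha⟩),
    erase_right_comm, mul_inv_cancel_left₀ hxia]

-- The added term `i = a` vanishes, so removing a node only rescales the remaining weights.
lemma divDiff_erase (f : K → K) (hx : Set.InjOn x s) {a : ι} (ha : a ∈ s) :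
    divDiff f x (s.erase a) = ∑ i ∈ s, f (x i) * ((x i - x a) * nodalWeight s x i) := by
  rw [← sum_erase s (a := a) (by rw [sub_self, zero_mul, mul_zero]), divDiff]
  refine sum_congr rfl fun i hi => ?_
  rw [nodalWeight_erase hx ha (mem_of_mem_erase hi) (ne_of_mem_erase hi)]

lemma divDiff_erase_sub_divDiff_erase (f : K → K) (hx : Set.InjOn x s) {a b : ι} (ha : a ∈ s)
    (hb : b ∈ s) :
    divDiff f x (s.erase a) - divDiff f x (s.erase b) = (x b - x a) * divDiff f x s := by
  rw [divDiff_erase f hx ha, divDiff_erase f hx hb, divDiff, ← sum_sub_distrib, mul_sum]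
  exact sum_congr rfl fun i _ => by ring

theorem divDiff_pow (hx : Set.InjOn x s) (k : ℕ) :
    divDiff (· ^ k) x s = if #s ≤ k + 1 then completeHomogeneous x s (k + 1 - #s) else 0 := by
  induction s using Finset.strongInduction with | H s ih => ?_
  obtain hs | ⟨a, ha, b, hb, hab⟩ := le_or_gt #s 1 |>.imp id one_lt_card.mp
  · obtain rfl | ⟨a, rfl⟩ :=
      (Nat.le_one_iff_eq_zero_or_eq_one.mp hs).imp card_eq_zero.mp card_eq_one.mp
    · simp [divDiff, completeHomogeneous_empty_succ]
    · simp [divDiff, nodalWeight, completeHomogeneous_singleton]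
  have hxab : x b - x a ≠ 0 := sub_ne_zero.mpr fun h => hab (hx ha hb h.symm)
  have key := divDiff_erase_sub_divDiff_erase (· ^ k) hx ha hb
  rw [ih _ (erase_ssubset ha) (hx.mono (erase_subset a s)),
    ih _ (erase_ssubset hb) (hx.mono (erase_subset b s)), card_erase_of_mem ha,
    card_erase_of_mem hb] at key
  refine mul_left_cancel₀ hxab (key.symm.trans ?_)
  have hs : 0 < #s := card_pos.mpr ⟨a, ha⟩
  by_cases h : #s ≤ k + 1
  · rw [if_pos (by omega), if_pos (by omega), if_pos h,
      show k + 1 - (#s - 1) = k + 1 - #s + 1 by omega]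
    linear_combination completeHomogeneous_succ_of_mem x hb _ -
      completeHomogeneous_succ_of_mem x ha (k + 1 - #s)
  · rw [if_neg h, show k + 1 - (#s - 1) = 0 by omega, completeHomogeneous_zero,
      completeHomogeneous_zero, sub_self, mul_zero]

lemma divDiff_image {κ : Type*} [DecidableEq κ] (f : K → K) {e : κ → ι}
    (he : Function.Injective e) (s : Finset κ) :
    divDiff f x (s.image e) = divDiff f (x ∘ e) s := by
  rw [divDiff, sum_image he.injOn]
  refine sum_congr rfl fun i _ => ?_
  rw [nodalWeight, nodalWeight, ← image_erase he, prod_image he.injOn]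
  rfl

theorem sum_prod_sub_sub_div_mul_eq (hx : Set.InjOn x s) (q : K) (f : K → K) :
    ∑ i ∈ s, (∏ j ∈ s.erase i, (x i - x j - q) / (x i - x j)) * f (x i) =
      ∑ t ∈ s.powerset, (-q) ^ (#t - 1) * divDiff f x t := by
  have hfactor : ∀ i ∈ s, ∀ j ∈ s.erase i,
      (x i - x j - q) / (x i - x j) = 1 + -q * (x i - x j)⁻¹ := fun i hi j hj => by
    have : x i - x j ≠ 0 :=
      sub_ne_zero.mpr fun h => ne_of_mem_erase hj (hx (mem_of_mem_erase hj) hi h.symm)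
    field_simp
    ring
  have hterm : ∀ i ∈ s, (∏ j ∈ s.erase i, (x i - x j - q) / (x i - x j)) * f (x i) =
      ∑ u ∈ (s.erase i).powerset,
        (-q) ^ (#(insert i u) - 1) * (f (x i) * nodalWeight (insert i u) x i) := fun i hi => by
    rw [prod_congr rfl (hfactor i hi), prod_one_add, sum_mul]
    refine sum_congr rfl fun u hu => ?_
    have hiu : i ∉ u := fun h => notMem_erase i s (mem_powerset.mp hu h)
    rw [prod_mul_distrib, prod_const, card_insert_of_notMem hiu, Nat.add_sub_cancel,
      nodalWeight, erase_insert hiu]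
    ring
  rw [sum_congr rfl hterm,
    sum_sum_powerset_erase_insert s fun i t => (-q) ^ (#t - 1) * (f (x i) * nodalWeight t x i)]
  exact sum_congr rfl fun t _ => by rw [divDiff, mul_sum]

theorem sum_injective_antidiagonalTuple_eq [Fintype ι] (hx : Function.Injective x) {l k : ℕ}
    (hl : l ≤ k + 1) :
    ∑ f : Fin l → ι with Function.Injective f,
        ∑ c ∈ Nat.antidiagonalTuple l (k + 1 - l), ∏ j, x (f j) ^ c j =
      l ! • ∑ t ∈ powersetCard l univ, divDiff (· ^ k) x t := by
  rw [← sum_filter_injective_image]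
  refine sum_congr rfl fun f hf => ?_
  have hf : Function.Injective f := (mem_filter.mp hf).2
  rw [divDiff_image _ hf, divDiff_pow (hx.comp hf).injOn, card_univ, Fintype.card_fin, if_pos hl,
    completeHomogeneous_univ_fin]
  rfl

end DividedDifference

theorem qPP_complete_homogeneous_expansion_general (N : ℕ) (x : Fin N → ℝ)
    (hx : Function.Injective x) (q : ℝ) (k : ℕ) :
    (∑ i, (∏ j ∈ Finset.univ.erase i, (x i - x j - q) / (x i - x j)) * x i ^ k =
      ∑ l ∈ Finset.Icc 1 N,
        if l ≤ k + 1 then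
          (-q) ^ (l - 1) / (Nat.factorial l : ℝ) *
            ∑ f ∈ Finset.univ.filter (fun f : Fin l → Fin N => Function.Injective f),
              ∑ c ∈ Finset.Nat.antidiagonalTuple l (k + 1 - l), ∏ j, x (f j) ^ c j
        else 0) ∧
    ∀ σ : Equiv.Perm (Fin N),
      ∑ i, (∏ j ∈ Finset.univ.erase i,
          (x (σ i) - x (σ j) - q) / (x (σ i) - x (σ j))) * x (σ i) ^ k =
      ∑ i, (∏ j ∈ Finset.univ.erase i, (x i - x j - q) / (x i - x j)) * x i ^ k := by
  refine ⟨?_, fun σ => ?_⟩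
  · rw [sum_prod_sub_sub_div_mul_eq hx.injOn q (· ^ k),
      sum_powerset_eq_sum_Icc_powersetCard _ (by simp [divDiff]), card_univ, Fintype.card_fin]
    refine sum_congr rfl fun l _ => ?_
    rw [sum_congr rfl fun t ht => by rw [(mem_powersetCard.mp ht).2], ← mul_sum]
    split_ifs with hl
    · rw [sum_injective_antidiagonalTuple_eq hx hl, nsmul_eq_mul]
      field_simp
    · refine mul_eq_zero_of_right _ (sum_eq_zero fun t ht => ?_)
      rw [divDiff_pow hx.injOn, (mem_powersetCard.mp ht).2, if_neg hl]
  · refine (sum_congr rfl fun i _ => ?_).trans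
      (Equiv.sum_comp σ fun i => (∏ j ∈ univ.erase i, (x i - x j - q) / (x i - x j)) * x i ^ k)
    rw [prod_univ_erase_comp_equiv σ i fun j => (x (σ i) - x j - q) / (x (σ i) - x j)]

/-- Expansion of `m_k^{(q)}` in complete homogeneous symmetric polynomials:
`m_k^{(q)}(x) = Σ_{l=1}^N ((-q)^{l-1}/l!) Σ_{i(1),…,i(l) distinct}
  h_{k-l+1}(x_{i(1)},…,x_{i(l)})` (with `h_m = 0` for `m < 0`);
in particular `m_k^{(q)}` is symmetric under permutations of the variables. -/
theorem qPP_complete_homogeneous_expansion (N : ℕ) (x : Fin N → ℝ)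
    (hx : Function.Injective x) (q : ℝ) (hq : q ≠ 0) (k : ℕ) :
    (∑ i, (∏ j ∈ Finset.univ.erase i, (x i - x j - q) / (x i - x j)) * x i ^ k =
      ∑ l ∈ Finset.Icc 1 N,
        if l ≤ k + 1 then
          (-q) ^ (l - 1) / (Nat.factorial l : ℝ) *
            ∑ f ∈ Finset.univ.filter (fun f : Fin l → Fin N => Function.Injective f),
              ∑ c ∈ Finset.Nat.antidiagonalTuple l (k + 1 - l), ∏ j, x (f j) ^ c j
        else 0) ∧
    ∀ σ : Equiv.Perm (Fin N),
      ∑ i, (∏ j ∈ Finset.univ.erase i,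
          (x (σ i) - x (σ j) - q) / (x (σ i) - x (σ j))) * x (σ i) ^ k =
      ∑ i, (∏ j ∈ Finset.univ.erase i, (x i - x j - q) / (x i - x j)) * x i ^ k :=
  qPP_complete_homogeneous_expansion_general N x hx q k
end

section
/- Let μ be a compactly supported probability measure on ℝ with Stieltjes transform G_μ(z) = ∫ (z - t)^{-1} dμ(t), and let ν be a compactly supported probability measure whose moments (ν_k) satisfy exp(Σ_{k≥0} μ_k z^{k+1}) = 1 + Σ_{k≥0} ν_k z^{k+1} as formal power series, where (μ_k) are the moments of μ. Then for |z| large, exp(G_μ(z)) = 1 + G_ν(z). -/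
/-!
For `|z|` beyond the supports, `G_λ(z) = Σ_k λ_k z^{-(k+1)}` is the value at `w = z⁻¹` of the
power series `seriesOf (λ_k)`, and this series converges absolutely there. Absolute convergence
makes evaluation at `w` multiplicative (Cauchy product), so the double series
`Σ_k Σ_n [X^n] f^k w^n / k!` is absolutely summable with row sums `f(w)^k / k!`. Summing it by
columns instead gives `exp (f(w)) = (expPS f)(w)`; for `f = seriesOf (μ_k)` the hypothesis turns
the right-hand side into `1 + G_ν(z)`.
-/

open Finset PowerSeries MeasureTheory

/-- `Σ_{k≥0} μ_k z^{k+1}` as a formal power series. -/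
noncomputable def seriesOf (μ : ℕ → ℝ) : PowerSeries ℝ :=
  PowerSeries.mk fun n => if n = 0 then 0 else μ (n - 1)

open scoped Nat

namespace PowerSeries

variable {R : Type*} [NormedCommRing R] {f g : R⟦X⟧} {w : R}

theorem coeff_mul_mul_pow (f g : R⟦X⟧) (w : R) (n : ℕ) :
    coeff n (f * g) * w ^ n =
      ∑ p ∈ antidiagonal n, (coeff p.1 f * w ^ p.1) * (coeff p.2 g * w ^ p.2) := by
  rw [coeff_mul, sum_mul]
  refine sum_congr rfl fun p hp => ?_
  rw [← mem_antidiagonal.1 hp, pow_add]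
  ring

theorem summable_norm_coeff_mul_mul_pow (hf : Summable fun n => ‖coeff n f * w ^ n‖)
    (hg : Summable fun n => ‖coeff n g * w ^ n‖) :
    Summable fun n => ‖coeff n (f * g) * w ^ n‖ := by
  simpa only [coeff_mul_mul_pow] using summable_norm_sum_mul_antidiagonal_of_summable_norm hf hg

theorem tsum_norm_coeff_mul_mul_pow_le (hf : Summable fun n => ‖coeff n f * w ^ n‖)
    (hg : Summable fun n => ‖coeff n g * w ^ n‖) :
    ∑' n, ‖coeff n (f * g) * w ^ n‖ ≤
      (∑' n, ‖coeff n f * w ^ n‖) * ∑' n, ‖coeff n g * w ^ n‖ := by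
  have hfg : Summable fun n =>
      ∑ p ∈ antidiagonal n, ‖coeff p.1 f * w ^ p.1‖ * ‖coeff p.2 g * w ^ p.2‖ :=
    summable_sum_mul_antidiagonal_of_summable_mul (f := fun n => ‖coeff n f * w ^ n‖)
      (g := fun n => ‖coeff n g * w ^ n‖) (hf.mul_of_nonneg hg (fun _ => norm_nonneg _)
        fun _ => norm_nonneg _)
  rw [tsum_mul_tsum_eq_tsum_sum_antidiagonal_of_summable_norm (by simpa only [norm_norm] using hf)
    (by simpa only [norm_norm] using hg)]
  refine (summable_norm_coeff_mul_mul_pow hf hg).tsum_le_tsum (fun n => ?_) hfg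
  rw [coeff_mul_mul_pow]
  exact (norm_sum_le _ _).trans (sum_le_sum fun p _ => norm_mul_le _ _)

theorem tsum_coeff_mul_mul_pow [CompleteSpace R] (hf : Summable fun n => ‖coeff n f * w ^ n‖)
    (hg : Summable fun n => ‖coeff n g * w ^ n‖) :
    ∑' n, coeff n (f * g) * w ^ n = (∑' n, coeff n f * w ^ n) * ∑' n, coeff n g * w ^ n := by
  simp only [tsum_mul_tsum_eq_tsum_sum_antidiagonal_of_summable_norm hf hg, coeff_mul_mul_pow]

theorem coeff_one_mul_pow_eq_zero {n : ℕ} (hn : n ≠ 0) (w : R) :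
    coeff n (1 : R⟦X⟧) * w ^ n = 0 := by
  rw [coeff_one, if_neg hn, zero_mul]

theorem hasSum_coeff_one_mul_pow (w : R) : HasSum (fun n => coeff n (1 : R⟦X⟧) * w ^ n) 1 := by
  simpa using hasSum_single 0 fun n hn => coeff_one_mul_pow_eq_zero hn w

theorem summable_norm_coeff_pow_mul_pow (hf : Summable fun n => ‖coeff n f * w ^ n‖) (k : ℕ) :
    Summable fun n => ‖coeff n (f ^ k) * w ^ n‖ := by
  induction k with
  | zero =>
    refine summable_of_ne_finset_zero (s := {0}) fun n hn => ?_
    rw [pow_zero, coeff_one_mul_pow_eq_zero (notMem_singleton.1 hn) w, norm_zero]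
  | succ k ih => simpa only [pow_succ] using summable_norm_coeff_mul_mul_pow ih hf

theorem tsum_norm_coeff_pow_mul_pow_le [NormOneClass R]
    (hf : Summable fun n => ‖coeff n f * w ^ n‖) (k : ℕ) :
    ∑' n, ‖coeff n (f ^ k) * w ^ n‖ ≤ (∑' n, ‖coeff n f * w ^ n‖) ^ k := by
  induction k with
  | zero =>
    rw [tsum_eq_single 0 fun n hn => by rw [pow_zero, coeff_one_mul_pow_eq_zero hn w, norm_zero]]
    simp
  | succ k ih =>
    rw [pow_succ, pow_succ]
    exact (tsum_norm_coeff_mul_mul_pow_le (summable_norm_coeff_pow_mul_pow hf k) hf).trans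
      (mul_le_mul_of_nonneg_right ih (tsum_nonneg fun _ => norm_nonneg _))

theorem tsum_coeff_pow_mul_pow [CompleteSpace R] (hf : Summable fun n => ‖coeff n f * w ^ n‖)
    (k : ℕ) : ∑' n, coeff n (f ^ k) * w ^ n = (∑' n, coeff n f * w ^ n) ^ k := by
  induction k with
  | zero => simp
  | succ k ih =>
    rw [pow_succ, pow_succ, tsum_coeff_mul_mul_pow (summable_norm_coeff_pow_mul_pow hf k) hf, ih]

end PowerSeries

theorem hasSum_coeff_expPS_mul_pow {f : ℝ⟦X⟧} {w : ℝ} (hf0 : constantCoeff f = 0)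
    (hf : Summable fun n => ‖coeff n f * w ^ n‖) :
    HasSum (fun n => coeff n (expPS f) * w ^ n) (Real.exp (∑' n, coeff n f * w ^ n)) := by
  set s := ∑' n, coeff n f * w ^ n
  set h : ℕ × ℕ → ℝ := fun p => coeff p.2 (f ^ p.1) * w ^ p.2 / (p.1)!
  have hrow_norm (k : ℕ) : HasSum (fun n => ‖h (k, n)‖)
      ((∑' n, ‖coeff n (f ^ k) * w ^ n‖) / k !) := by
    simpa [h, norm_div] using ((summable_norm_coeff_pow_mul_pow hf k).hasSum.div_const (k ! : ℝ))
  have hh : Summable h := by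
    refine Summable.of_norm ((summable_prod_of_nonneg fun _ => norm_nonneg _).2
      ⟨fun k => (hrow_norm k).summable, ?_⟩)
    refine (Real.summable_pow_div_factorial (∑' n, ‖coeff n f * w ^ n‖)).of_nonneg_of_le
      (fun k => tsum_nonneg fun _ => norm_nonneg _) fun k => ?_
    rw [(hrow_norm k).tsum_eq]
    gcongr
    exact tsum_norm_coeff_pow_mul_pow_le hf k
  have hrow (k : ℕ) : HasSum (fun n => h (k, n)) (s ^ k / k !) := by
    rw [← tsum_coeff_pow_mul_pow hf k]
    exact ((summable_norm_coeff_pow_mul_pow hf k).of_norm.hasSum.div_const _)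
  -- only `k ≤ n` contributes to the `n`-th coefficient, since `f ^ k` has order at least `k`
  have hcol (n : ℕ) : HasSum (fun k => h (k, n)) (coeff n (expPS f) * w ^ n) := by
    have hvanish : ∀ k ∉ range (n + 1), h (k, n) = 0 := fun k hk => by
      have hnk : (n : ℕ∞) < k := by exact_mod_cast not_lt.1 (mt mem_range.2 hk)
      simp [h, coeff_of_lt_order n (hnk.trans_le (le_order_pow_of_constantCoeff_eq_zero k hf0))]
    have hcoeff : coeff n (expPS f) * w ^ n = ∑ k ∈ range (n + 1), h (k, n) := by
      rw [expPS, coeff_mk, sum_mul]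
      exact sum_congr rfl fun k _ => div_mul_eq_mul_div _ _ _
    rw [hcoeff]
    exact hasSum_sum_of_ne_finset_zero hvanish
  have htotal : ∑' p, h p = Real.exp s :=
    (hh.hasSum.prod_fiberwise hrow).unique
      (Real.exp_eq_exp_ℝ ▸ NormedSpace.expSeries_div_hasSum_exp s)
  exact htotal ▸ ((Equiv.prodComm ℕ ℕ).hasSum_iff.2 hh.hasSum).prod_fiberwise hcol

theorem constantCoeff_seriesOf (a : ℕ → ℝ) : constantCoeff (seriesOf a) = 0 := by
  simp [← coeff_zero_eq_constantCoeff_apply, seriesOf]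

theorem hasSum_coeff_seriesOf_mul_pow_iff {a : ℕ → ℝ} {w s : ℝ} :
    HasSum (fun n => coeff n (seriesOf a) * w ^ n) s ↔ HasSum (fun k => a k * w ^ (k + 1)) s := by
  rw [← hasSum_nat_add_iff' 1]
  simp [seriesOf]

theorem summable_norm_coeff_seriesOf_mul_pow {a : ℕ → ℝ} {C M w : ℝ} (hM : 0 ≤ M)
    (ha : ∀ k, |a k| ≤ C * M ^ k) (hw : M * |w| < 1) :
    Summable fun n => ‖coeff n (seriesOf a) * w ^ n‖ := by
  rw [← summable_nat_add_iff 1]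
  refine ((summable_geometric_of_lt_one (by positivity) hw).mul_left (C * |w|)).of_nonneg_of_le
    (fun _ => norm_nonneg _) fun k => ?_
  have hw0 : 0 ≤ |w| ^ (k + 1) := by positivity
  calc ‖coeff (k + 1) (seriesOf a) * w ^ (k + 1)‖ = |a k| * |w| ^ (k + 1) := by
        simp [seriesOf]
    _ ≤ C * M ^ k * |w| ^ (k + 1) := mul_le_mul_of_nonneg_right (ha k) hw0
    _ = C * |w| * (M * |w|) ^ k := by ring

section Moments

variable {μ : Measure ℝ} {M : ℝ}

theorem eventually_ae_abs_le_of_exists (h : ∃ M : ℝ, μ {x : ℝ | M < |x|} = 0) :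
    ∀ᶠ M in Filter.atTop, ∀ᵐ t ∂μ, |t| ≤ M := by
  obtain ⟨M₀, hM₀⟩ := h
  filter_upwards [Filter.eventually_ge_atTop M₀] with M hM
  exact ae_iff.2 (measure_mono_null (fun t ht => hM.trans_lt (not_le.1 ht)) hM₀)

theorem ae_norm_pow_le (hμM : ∀ᵐ t ∂μ, |t| ≤ M) (k : ℕ) :
    ∀ᵐ t ∂μ, ‖t ^ k‖ ≤ M ^ k := by
  filter_upwards [hμM] with t ht
  rw [norm_pow, Real.norm_eq_abs]
  exact pow_le_pow_left₀ (abs_nonneg t) ht k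

variable [IsFiniteMeasure μ]

theorem abs_integral_pow_le (hμM : ∀ᵐ t ∂μ, |t| ≤ M) (k : ℕ) :
    |∫ t, t ^ k ∂μ| ≤ μ.real Set.univ * M ^ k := by
  rw [mul_comm]
  exact norm_integral_le_of_norm_le_const (ae_norm_pow_le hμM k)

theorem hasSum_integral_pow_mul_inv_pow {z : ℝ} (hM : 0 ≤ M) (hμM : ∀ᵐ t ∂μ, |t| ≤ M)
    (hz : M < |z|) :
    HasSum (fun k => (∫ t, t ^ k ∂μ) * z⁻¹ ^ (k + 1)) (∫ t, (z - t)⁻¹ ∂μ) := by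
  have hz0 : 0 < |z| := hM.trans_lt hz
  have hr : M * |z|⁻¹ < 1 := by rwa [← div_eq_mul_inv, div_lt_one hz0]
  set F : ℕ → ℝ → ℝ := fun k t => t ^ k * z⁻¹ ^ (k + 1)
  have hF_bound (k : ℕ) : ∀ᵐ t ∂μ, ‖F k t‖ ≤ |z|⁻¹ * (M * |z|⁻¹) ^ k := by
    filter_upwards [ae_norm_pow_le hμM k] with t ht
    calc ‖F k t‖ = ‖t ^ k‖ * |z|⁻¹ ^ (k + 1) := by simp [F]
      _ ≤ M ^ k * |z|⁻¹ ^ (k + 1) := by gcongr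
      _ = |z|⁻¹ * (M * |z|⁻¹) ^ k := by ring
  have hF_int (k : ℕ) : Integrable (F k) μ :=
    Integrable.of_bound (by fun_prop) _ (hF_bound k)
  have hF_sum : Summable fun k => ∫ t, ‖F k t‖ ∂μ := by
    refine ((summable_geometric_of_lt_one (by positivity) hr).mul_left
      (|z|⁻¹ * μ.real Set.univ)).of_nonneg_of_le
      (fun _ => integral_nonneg fun _ => norm_nonneg _) fun k => ?_
    have hnorm := norm_integral_le_of_norm_le_const (μ := μ) (f := fun t => ‖F k t‖)
      (by simpa only [norm_norm] using hF_bound k)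
    exact (le_abs_self _).trans (hnorm.trans_eq (by ring))
  -- pointwise, `(z - t)⁻¹ = z⁻¹ (1 - t / z)⁻¹` is a convergent geometric series
  have hgeom : ∀ᵐ t ∂μ, ∑' k, F k t = (z - t)⁻¹ := by
    filter_upwards [hμM] with t ht
    have hq : ‖t * z⁻¹‖ < 1 := by
      rw [norm_mul, norm_inv, Real.norm_eq_abs, Real.norm_eq_abs]
      exact (mul_le_mul_of_nonneg_right ht (by positivity)).trans_lt hr
    have hz' : z ≠ 0 := abs_pos.1 hz0
    have hinv : z⁻¹ * (1 - t * z⁻¹)⁻¹ = (z - t)⁻¹ := by field_simp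
    rw [← hinv, ← ((hasSum_geometric_of_norm_lt_one hq).mul_left z⁻¹).tsum_eq]
    exact tsum_congr fun k => by simp only [F]; ring
  simpa only [F, integral_mul_const, integral_congr_ae hgeom]
    using hasSum_integral_of_summable_integral_norm hF_int hF_sum

end Moments

/-- Markov-Krein correspondence at the level of Stieltjes transforms: if the moments
of compactly supported probability measures `μ, ν` satisfy
`exp(Σ_k μ_k z^{k+1}) = 1 + Σ_k ν_k z^{k+1}` as formal power series, then for `|z|`
large, `exp(G_μ(z)) = 1 + G_ν(z)`, where `G_λ(z) = ∫ (z-t)⁻¹ dλ(t)`. -/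
theorem markov_krein_stieltjes (μ ν : Measure ℝ)
    [IsProbabilityMeasure μ] [IsProbabilityMeasure ν]
    (hμ : ∃ M : ℝ, μ {x : ℝ | M < |x|} = 0) (hν : ∃ M : ℝ, ν {x : ℝ | M < |x|} = 0)
    (hrel : expPS (seriesOf fun k => ∫ t, t ^ k ∂μ) =
      1 + seriesOf fun k => ∫ t, t ^ k ∂ν) :
    ∃ R : ℝ, ∀ z : ℝ, R < |z| →
      Real.exp (∫ t, (z - t)⁻¹ ∂μ) = 1 + ∫ t, (z - t)⁻¹ ∂ν := by
  obtain ⟨M, hμM, hνM, hM⟩ := ((eventually_ae_abs_le_of_exists hμ).and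
    ((eventually_ae_abs_le_of_exists hν).and (Filter.eventually_ge_atTop 0))).exists
  refine ⟨M, fun z hz => ?_⟩
  have hGμ := hasSum_coeff_seriesOf_mul_pow_iff.2 (hasSum_integral_pow_mul_inv_pow hM hμM hz)
  have hGν := hasSum_coeff_seriesOf_mul_pow_iff.2 (hasSum_integral_pow_mul_inv_pow hM hνM hz)
  have hzM : M * |z⁻¹| < 1 := by
    rwa [abs_inv, ← div_eq_mul_inv, div_lt_one (hM.trans_lt hz)]
  have hexp := hasSum_coeff_expPS_mul_pow (constantCoeff_seriesOf _)
    (summable_norm_coeff_seriesOf_mul_pow hM (abs_integral_pow_le hμM) hzM)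
  rw [hGμ.tsum_eq, hrel] at hexp
  exact hexp.unique (by simpa only [map_add, add_mul] using (hasSum_coeff_one_mul_pow _).add hGν)
end

section
/- Let X and Y be two sequences of moments: suppose (μ_k) are given by μ_k = Σ_{m=0}^{k-1} (k!/(m!(m+1)!(k-m)!))·(d^m/du^m F_q^{k-m}(u))|_{u=0} where F_q(u) = e_q(u)Ψ'(e_q(u)) + e_q(u)/(e_q(u)-1) - 1/u with e_q(u) = (1-qu)^{-1/q}, and (ν_k) are given by the same formula with q replaced by -q and Ψ(u) replaced by Ψ(u^{-1}). Then ν_k = Σ_{j=0}^k C(k,j)(-1)^j μ_j, i.e., the ν_k are the moments of the pushforward x ↦ 1 - x of the measure with moments (μ_k). -/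
/-!
Put `w = (1 + q u)^(1/q)`. Then `e_{-q}(u) = w` and `e_q(-u) = w⁻¹`, and the chain rule for
`v ↦ Ψ v⁻¹` turns the expression defining `G u` into `1 - F (-u)` for small `u ≠ 0`; by continuity
`G u = 1 - F (-u)` on a neighbourhood of `0`. Expanding `(1 - F (-u))^n` binomially expresses the
derivatives of the powers of `G` through those of `F`, and the identity
`C(k,m) C(k-m,i) = C(k,m+i) C(m+i,m)` regroups the resulting double sum into
`Σ_j C(k,j) (-1)^j μ_j`.
-/

open Finset Filter Topology
open scoped ContDiff

/-- `F_q u = fqExpr Ψ (e_q u) u`. -/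
noncomputable def fqExpr (Ψ : ℝ → ℝ) (w u : ℝ) : ℝ := w * deriv Ψ w + w / (w - 1) - 1 / u

lemma deriv_comp_inv (Ψ : ℝ → ℝ) {x : ℝ} (hx : x ≠ 0) :
    deriv (fun v => Ψ v⁻¹) x = -deriv Ψ x⁻¹ / x ^ 2 := by
  by_cases hΨ : DifferentiableAt ℝ Ψ x⁻¹
  · rw [← Function.comp_def, (hΨ.hasDerivAt.comp x (hasDerivAt_inv hx)).deriv]
    ring
  -- `Ψ = (fun v => Ψ v⁻¹) ∘ Inv.inv`, so both derivatives vanish together.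
  · have hcomp : ¬ DifferentiableAt ℝ (fun v => Ψ v⁻¹) x := fun h => hΨ <| by
      rw [← inv_inv x] at h
      simpa [Function.comp_def] using h.comp x⁻¹ (differentiableAt_inv (inv_ne_zero hx))
    rw [deriv_zero_of_not_differentiableAt hΨ, deriv_zero_of_not_differentiableAt hcomp]
    simp

lemma fqExpr_comp_inv (Ψ : ℝ → ℝ) {w : ℝ} (hw0 : w ≠ 0) (hw1 : w ≠ 1) (u : ℝ) :
    fqExpr (fun v => Ψ v⁻¹) w u = 1 - fqExpr Ψ w⁻¹ (-u) := by
  have hw_sub_one : w - 1 ≠ 0 := sub_ne_zero.mpr hw1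
  have hone_sub_w : 1 - w ≠ 0 := sub_ne_zero.mpr hw1.symm
  simp only [fqExpr, deriv_comp_inv Ψ hw0]
  field_simp
  ring

lemma rpow_one_div_ne_one {q b : ℝ} (hq : q ≠ 0) (hb0 : 0 < b) (hb1 : b ≠ 1) :
    b ^ (1 / q) ≠ 1 := by
  intro h
  apply hb1
  calc b = (b ^ (1 / q)) ^ q := by
        rw [← Real.rpow_mul hb0.le, one_div_mul_cancel hq, Real.rpow_one]
    _ = 1 := by rw [h, Real.one_rpow]

lemma eventuallyEq_one_sub_comp_neg {q : ℝ} (hq0 : q ≠ 0) {Ψ F G : ℝ → ℝ}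
    (hFc : ContinuousAt F 0) (hGc : ContinuousAt G 0)
    (hF : ∀ᶠ u in 𝓝[≠] 0, F u = fqExpr Ψ ((1 - q * u) ^ ((-1 : ℝ) / q)) u)
    (hG : ∀ᶠ u in 𝓝[≠] 0, G u = fqExpr (fun v => Ψ v⁻¹) ((1 + q * u) ^ ((1 : ℝ) / q)) u) :
    G =ᶠ[𝓝 0] fun u => 1 - F (-u) := by
  have hFc' : ContinuousAt (fun u => 1 - F (-u)) 0 :=
    continuousAt_const.sub (ContinuousAt.comp (by simpa using hFc) continuousAt_neg)
  rw [← hGc.eventuallyEq_nhds_iff_eventuallyEq_nhdsNE hFc']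
  have hneg : Tendsto Neg.neg (𝓝[≠] (0 : ℝ)) (𝓝[≠] 0) := by
    have := (neg_nhdsNE (a := (0 : ℝ))).le
    rwa [neg_zero] at this
  have hpos : ∀ᶠ u in 𝓝 (0 : ℝ), 0 < 1 + q * u := by
    have : Tendsto (fun u => 1 + q * u) (𝓝 0) (𝓝 1) := by
      simpa using ((by fun_prop : Continuous fun u : ℝ => 1 + q * u).tendsto 0)
    exact this.eventually (lt_mem_nhds one_pos)
  filter_upwards [hneg.eventually hF, hG, nhdsWithin_le_nhds hpos, self_mem_nhdsWithin]
    with u hFu hGu hu hu0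
  have hw1 : (1 + q * u) ^ ((1 : ℝ) / q) ≠ 1 :=
    rpow_one_div_ne_one hq0 hu (by simpa [hq0] using hu0)
  have hinv : (1 - q * -u) ^ ((-1 : ℝ) / q) = ((1 + q * u) ^ ((1 : ℝ) / q))⁻¹ := by
    rw [← Real.rpow_neg hu.le, neg_div, mul_neg, sub_neg_eq_add]
  rw [hGu, hFu, hinv, fqExpr_comp_inv Ψ (Real.rpow_pos_of_pos hu _).ne' hw1]

lemma sum_choose_mul_sum_choose {R : Type*} [CommSemiring R] (k : ℕ) (B : ℕ → ℕ → R) :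
    ∑ m ∈ range (k + 1), (k.choose m : R) *
        ∑ i ∈ range (k - m + 1), ((k - m).choose i : R) * B m i
      = ∑ j ∈ range (k + 1), (k.choose j : R) *
        ∑ m ∈ range (j + 1), (j.choose m : R) * B m (j - m) := by
  calc _ = ∑ m ∈ Ico 0 (k + 1), ∑ j ∈ Ico m (k + 1),
        (k.choose j : R) * j.choose m * B m (j - m) := by
        refine sum_congr (by simp) fun m hm => ?_
        rw [sum_Ico_eq_sum_range, mul_sum, show k + 1 - m = k - m + 1 by grind]
        refine sum_congr rfl fun i _ => ?_
        rw [Nat.add_sub_cancel_left, ← mul_assoc, ← Nat.cast_mul, ← Nat.cast_mul,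
          Nat.choose_mul (Nat.le_add_right m i), Nat.add_sub_cancel_left]
    _ = _ := by
        rw [sum_Ico_Ico_comm, ← range_eq_Ico]
        simp only [mul_sum, mul_assoc, ← range_eq_Ico]

lemma iteratedDeriv_pow_of_eventuallyEq_one_sub_comp_neg
    {𝕜 : Type*} [NontriviallyNormedField 𝕜] {f g : 𝕜 → 𝕜} {m : ℕ} (hf : ContDiffAt 𝕜 m f 0)
    (hg : g =ᶠ[𝓝 0] fun u => 1 - f (-u)) (n : ℕ) :
    iteratedDeriv m (fun u => g u ^ n) 0
      = ∑ i ∈ range (n + 1), (n.choose i : 𝕜) * (-1) ^ (i + m) * iteratedDeriv m (f · ^ i) 0 := by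
  have hfneg : ContDiffAt 𝕜 m (fun u => f (-u)) 0 :=
    ContDiffAt.comp (g := f) 0 (by simpa using hf) contDiff_neg.contDiffAt
  calc iteratedDeriv m (fun u => g u ^ n) 0
      = iteratedDeriv m
          (fun u => ∑ i ∈ range (n + 1), (-1) ^ i * (n.choose i : 𝕜) * f (-u) ^ i) 0 := by
        refine EventuallyEq.iteratedDeriv_eq m (hg.mono fun u hu => ?_)
        dsimp only at hu ⊢
        rw [hu, sub_eq_neg_add, add_pow]
        refine sum_congr rfl fun i _ => ?_
        rw [neg_pow, one_pow]
        ring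
    _ = ∑ i ∈ range (n + 1),
          (-1) ^ i * (n.choose i : 𝕜) * iteratedDeriv m (fun u => f (-u) ^ i) 0 := by
        rw [iteratedDeriv_fun_sum fun i _ => contDiffAt_const.mul (hfneg.pow i)]
        simp only [iteratedDeriv_const_mul_field]
    _ = _ := by
        refine sum_congr rfl fun i _ => ?_
        rw [iteratedDeriv_comp_neg m (f · ^ i), neg_zero, smul_eq_mul, pow_add]
        ring

/-- The sum runs up to `m = k`: that summand vanishes for `k ≥ 1` and is `1` for `k = 0`. -/
noncomputable def momentSeq (f : ℝ → ℝ) (k : ℕ) : ℝ :=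
  ∑ m ∈ range (k + 1), (k.choose m : ℝ) / (m + 1).factorial * iteratedDeriv m (f · ^ (k - m)) 0

lemma eq_momentSeq {f : ℝ → ℝ} {μ : ℕ → ℝ} (h0 : μ 0 = 1)
    (h : ∀ k : ℕ, 1 ≤ k → μ k = ∑ m ∈ range k,
      (k.factorial : ℝ) / ((m.factorial : ℝ) * ((m + 1).factorial : ℝ) * ((k - m).factorial : ℝ)) *
        iteratedDeriv m (fun u => f u ^ (k - m)) 0) :
    μ = momentSeq f := by
  funext k
  rcases Nat.eq_zero_or_pos k with rfl | hk
  · simp [momentSeq, h0]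
  · rw [h k hk, momentSeq, sum_range_succ, Nat.sub_self]
    simp only [pow_zero, iteratedDeriv_const, hk.ne', if_false, mul_zero, add_zero]
    refine sum_congr rfl fun m hm => ?_
    rw [Nat.cast_choose ℝ (mem_range.mp hm).le]
    ring

lemma momentSeq_of_eventuallyEq_one_sub_comp_neg {f g : ℝ → ℝ} (hf : ContDiffAt ℝ ∞ f 0)
    (hg : g =ᶠ[𝓝 0] fun u => 1 - f (-u)) (k : ℕ) :
    momentSeq g k = ∑ j ∈ range (k + 1), (k.choose j : ℝ) * (-1) ^ j * momentSeq f j := by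
  set A : ℕ → ℕ → ℝ := fun m i => iteratedDeriv m (f · ^ i) 0
  calc momentSeq g k
      = ∑ m ∈ range (k + 1), (k.choose m : ℝ) * ∑ i ∈ range (k - m + 1),
          ((k - m).choose i : ℝ) * ((-1) ^ (i + m) * A m i / (m + 1).factorial) := by
        refine sum_congr rfl fun m _ => ?_
        rw [iteratedDeriv_pow_of_eventuallyEq_one_sub_comp_neg (hf.of_le (mod_cast le_top)) hg,
          mul_sum, mul_sum]
        refine sum_congr rfl fun i _ => ?_
        ring
    _ = ∑ j ∈ range (k + 1), (k.choose j : ℝ) * ∑ m ∈ range (j + 1),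
          (j.choose m : ℝ) * ((-1) ^ (j - m + m) * A m (j - m) / (m + 1).factorial) :=
        sum_choose_mul_sum_choose k fun m i => (-1) ^ (i + m) * A m i / (m + 1).factorial
    _ = _ := by
        refine sum_congr rfl fun j _ => ?_
        simp only [momentSeq, mul_assoc, mul_sum]
        refine sum_congr rfl fun m hm => ?_
        rw [Nat.sub_add_cancel (Nat.lt_succ_iff.mp (mem_range.mp hm))]
        ring

theorem moment_duality_general (q : ℝ) (hq0 : q ≠ 0)
    (Ψ : ℝ → ℝ)
    (F G : ℝ → ℝ) (hFan : AnalyticAt ℝ F 0) (hGan : AnalyticAt ℝ G 0)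
    (hF : ∀ᶠ u in nhdsWithin (0 : ℝ) {(0 : ℝ)}ᶜ, F u =
      (1 - q * u) ^ ((-1 : ℝ) / q) * deriv Ψ ((1 - q * u) ^ ((-1 : ℝ) / q)) +
        (1 - q * u) ^ ((-1 : ℝ) / q) / ((1 - q * u) ^ ((-1 : ℝ) / q) - 1) - 1 / u)
    (hG : ∀ᶠ u in nhdsWithin (0 : ℝ) {(0 : ℝ)}ᶜ, G u =
      (1 + q * u) ^ ((1 : ℝ) / q) * deriv (fun v => Ψ v⁻¹) ((1 + q * u) ^ ((1 : ℝ) / q)) +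
        (1 + q * u) ^ ((1 : ℝ) / q) / ((1 + q * u) ^ ((1 : ℝ) / q) - 1) - 1 / u)
    (μ ν : ℕ → ℝ) (hμ0 : μ 0 = 1) (hν0 : ν 0 = 1)
    (hμ : ∀ k : ℕ, 1 ≤ k → μ k = ∑ m ∈ Finset.range k,
      (k.factorial : ℝ) / ((m.factorial : ℝ) * ((m + 1).factorial : ℝ) * ((k - m).factorial : ℝ)) *
        iteratedDeriv m (fun u => F u ^ (k - m)) 0)
    (hν : ∀ k : ℕ, 1 ≤ k → ν k = ∑ m ∈ Finset.range k,
      (k.factorial : ℝ) / ((m.factorial : ℝ) * ((m + 1).factorial : ℝ) * ((k - m).factorial : ℝ)) *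
        iteratedDeriv m (fun u => G u ^ (k - m)) 0) :
    ∀ k : ℕ, ν k = ∑ j ∈ Finset.range (k + 1), (k.choose j : ℝ) * (-1) ^ j * μ j := by
  have hGF : G =ᶠ[𝓝 0] fun u => 1 - F (-u) :=
    eventuallyEq_one_sub_comp_neg hq0 hFan.continuousAt hGan.continuousAt hF hG
  rw [eq_momentSeq hμ0 hμ, eq_momentSeq hν0 hν]
  exact momentSeq_of_eventuallyEq_one_sub_comp_neg hFan.contDiffAt hGF

/-- Duality `E[X^k] = E[(1-Y)^k]`: if `(μ_k)` are the moments given by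
`μ_k = Σ_{m=0}^{k-1} (k!/(m!(m+1)!(k-m)!))·(d^m/du^m F_q^{k-m})(0)` where
`F_q(u) = e_q(u)Ψ'(e_q(u)) + e_q(u)/(e_q(u)-1) - 1/u`, `e_q(u) = (1-qu)^{-1/q}`,
and `(ν_k)` are given by the same formula with `q` replaced by `-q` and `Ψ(u)` by
`Ψ(u⁻¹)`, then `ν_k = Σ_{j=0}^k C(k,j)(-1)^j μ_j`, i.e. `(ν_k)` are the moments of
the pushforward under `x ↦ 1-x` of the measure with moments `(μ_k)`. -/
theorem moment_duality (q : ℝ) (hq1 : -1 ≤ q) (hq2 : q ≤ 1) (hq0 : q ≠ 0)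
    (Ψ : ℝ → ℝ) (hΨ : AnalyticAt ℝ Ψ 1)
    (F G : ℝ → ℝ) (hFan : AnalyticAt ℝ F 0) (hGan : AnalyticAt ℝ G 0)
    (hF : ∀ᶠ u in nhdsWithin (0 : ℝ) {(0 : ℝ)}ᶜ, F u =
      (1 - q * u) ^ ((-1 : ℝ) / q) * deriv Ψ ((1 - q * u) ^ ((-1 : ℝ) / q)) +
        (1 - q * u) ^ ((-1 : ℝ) / q) / ((1 - q * u) ^ ((-1 : ℝ) / q) - 1) - 1 / u)
    (hG : ∀ᶠ u in nhdsWithin (0 : ℝ) {(0 : ℝ)}ᶜ, G u =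
      (1 + q * u) ^ ((1 : ℝ) / q) * deriv (fun v => Ψ v⁻¹) ((1 + q * u) ^ ((1 : ℝ) / q)) +
        (1 + q * u) ^ ((1 : ℝ) / q) / ((1 + q * u) ^ ((1 : ℝ) / q) - 1) - 1 / u)
    (μ ν : ℕ → ℝ) (hμ0 : μ 0 = 1) (hν0 : ν 0 = 1)
    (hμ : ∀ k : ℕ, 1 ≤ k → μ k = ∑ m ∈ Finset.range k,
      (k.factorial : ℝ) / ((m.factorial : ℝ) * ((m + 1).factorial : ℝ) * ((k - m).factorial : ℝ)) *
        iteratedDeriv m (fun u => F u ^ (k - m)) 0)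
    (hν : ∀ k : ℕ, 1 ≤ k → ν k = ∑ m ∈ Finset.range k,
      (k.factorial : ℝ) / ((m.factorial : ℝ) * ((m + 1).factorial : ℝ) * ((k - m).factorial : ℝ)) *
        iteratedDeriv m (fun u => G u ^ (k - m)) 0) :
    ∀ k : ℕ, ν k = ∑ j ∈ Finset.range (k + 1), (k.choose j : ℝ) * (-1) ^ j * μ j :=
  moment_duality_general q hq0 Ψ F G hFan hGan hF hG μ ν hμ0 hν0 hμ hν
end
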